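/- Suppose the random variables X_1, …, X_n are mutually independent and for some i ∈ [n] and A_i ⊆ [n]∖{i} the decodability condition H[X_i | Y_N, X_{A_i}] = 0 holds. Then H[X_i] ≤ H[Y_N | X_{A_i}]. (The basic converse step used to bound each achievable rate by the server outputs.) -/

import Mathlib

/-!
Setup for the distributed index coding problem: `n` messages `X i` (finitely valued
random variables on a probability space `(Ω, μ)`), one server for each nonempty
subset `J` of `Fin n`, whose output `Y_J = φ_J (X_J)` is a deterministic function of
the messages indexed by `J`.  Shannon entropy `ent`, conditional entropy `cent` and
conditional mutual information `cmi` are defined from scratch.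
-/

open MeasureTheory Real

namespace DistIndexCoding

variable {Ω : Type*} [MeasurableSpace Ω]

/-- Shannon entropy (in nats) of a finitely-valued random variable. -/
noncomputable def ent {α : Type*} [Fintype α] (μ : Measure Ω) (X : Ω → α) : ℝ :=
  ∑ a : α, negMulLog (μ (X ⁻¹' {a})).toReal

/-- Conditional entropy `H[X | Y]`, defined via the chain rule `H[X|Y] = H[X,Y] - H[Y]`. -/
noncomputable def cent {α β : Type*} [Fintype α] [Fintype β]
    (μ : Measure Ω) (X : Ω → α) (Y : Ω → β) : ℝ :=
  ent μ (fun ω => (X ω, Y ω)) - ent μ Y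

/-- Conditional mutual information `I[X : Y | Z] = H[X | Z] - H[X | Y, Z]`. -/
noncomputable def cmi {α β γ : Type*} [Fintype α] [Fintype β] [Fintype γ]
    (μ : Measure Ω) (X : Ω → α) (Y : Ω → β) (Z : Ω → γ) : ℝ :=
  cent μ X Z - cent μ X (fun ω => (Y ω, Z ω))

variable {n : ℕ} {𝒳 : Fin n → Type*} {𝒴 : Finset (Fin n) → Type*}

/-- The subtuple `X_S = (X_i : i ∈ S)`. -/
def subtuple (X : ∀ i, Ω → 𝒳 i) (S : Finset (Fin n)) : Ω → (∀ i : S, 𝒳 i.1) :=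
  fun ω i => X i.1 ω

/-- The tuple of server outputs `(Y_J = φ_J(X_J) : J satisfying p)`; taking
`p J := J.Nonempty` gives the full tuple `Y_N`. -/
def outputs (φ : ∀ J : Finset (Fin n), (∀ j : J, 𝒳 j.1) → 𝒴 J)
    (X : ∀ i, Ω → 𝒳 i) (p : Finset (Fin n) → Prop) [DecidablePred p] :
    Ω → (∀ J : {J : Finset (Fin n) // p J}, 𝒴 J.1) :=
  fun ω J => φ J.1 (fun j => X j.1 ω)

lemma _root_.Real.negMulLog_sum_le {ι : Type*} (s : Finset ι) (g : ι → ℝ)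
    (hg : ∀ j ∈ s, 0 ≤ g j) :
    negMulLog (∑ j ∈ s, g j) ≤ ∑ j ∈ s, negMulLog (g j) := by
  have hsum : negMulLog (∑ j ∈ s, g j) = ∑ j ∈ s, g j * -log (∑ k ∈ s, g k) := by
    rw [← Finset.sum_mul, negMulLog, neg_mul, mul_neg]
  rw [hsum]
  refine Finset.sum_le_sum fun j hj => ?_
  rcases (hg j hj).eq_or_lt with hzero | hpos
  · simp [← hzero]
  · have hlog : log (g j) ≤ log (∑ k ∈ s, g k) :=
      log_le_log hpos (Finset.single_le_sum hg hj)
    rw [negMulLog, neg_mul, mul_neg]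
    exact neg_le_neg (mul_le_mul_of_nonneg_left hlog hpos.le)

section Entropy

variable {μ : Measure Ω} {α β γ : Type*} [Fintype α] [Fintype β] [Fintype γ]

lemma sum_measureReal_fiber_eq_one [IsProbabilityMeasure μ] (Z : Ω → α)
    (hZ : ∀ a, MeasurableSet (Z ⁻¹' {a})) :
    ∑ a, (μ (Z ⁻¹' {a})).toReal = 1 := by
  simpa [measureReal_def] using
    sum_measureReal_preimage_singleton (μ := μ) Finset.univ fun a _ => hZ a

lemma ent_comp_le [IsFiniteMeasure μ] (Z : Ω → α) (hZ : ∀ a, MeasurableSet (Z ⁻¹' {a}))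
    (f : α → β) :
    ent μ (fun ω => f (Z ω)) ≤ ent μ Z := by
  classical
  have hfiber : ∀ b, (μ ((fun ω => f (Z ω)) ⁻¹' {b})).toReal
      = ∑ a ∈ Finset.univ.filter (f · = b), (μ (Z ⁻¹' {a})).toReal := by
    intro b
    simp only [← measureReal_def]
    rw [sum_measureReal_preimage_singleton _ fun a _ => hZ a]
    congr 2
    ext ω
    simp
  calc ent μ (fun ω => f (Z ω))
      = ∑ b, negMulLog (∑ a ∈ Finset.univ.filter (f · = b), (μ (Z ⁻¹' {a})).toReal) := by
        simp only [ent, hfiber]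
    _ ≤ ∑ b, ∑ a ∈ Finset.univ.filter (f · = b), negMulLog (μ (Z ⁻¹' {a})).toReal :=
        Finset.sum_le_sum fun b _ => negMulLog_sum_le _ _ fun a _ => ENNReal.toReal_nonneg
    _ = ent μ Z := Finset.sum_fiberwise _ _ _

lemma ent_pair_eq_add_of_indepFun [IsProbabilityMeasure μ]
    [MeasurableSpace α] [MeasurableSingletonClass α]
    [MeasurableSpace β] [MeasurableSingletonClass β]
    {U : Ω → α} {W : Ω → β} (hU : Measurable U) (hW : Measurable W)
    (hUW : ProbabilityTheory.IndepFun U W μ) :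
    ent μ (fun ω => (U ω, W ω)) = ent μ U + ent μ W := by
  set p : α → ℝ := fun a => (μ (U ⁻¹' {a})).toReal
  set q : β → ℝ := fun b => (μ (W ⁻¹' {b})).toReal
  have hp : ∑ a, p a = 1 := sum_measureReal_fiber_eq_one U fun a => hU (measurableSet_singleton a)
  have hq : ∑ b, q b = 1 := sum_measureReal_fiber_eq_one W fun b => hW (measurableSet_singleton b)
  have hjoint : ∀ c : α × β,
      (μ ((fun ω => (U ω, W ω)) ⁻¹' {c})).toReal = p c.1 * q c.2 := by
    rintro ⟨a, b⟩
    rw [← Set.singleton_prod_singleton, Set.mk_preimage_prod,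
      hUW.measure_inter_preimage_eq_mul _ _ (measurableSet_singleton a)
        (measurableSet_singleton b), ENNReal.toReal_mul]
  calc ent μ (fun ω => (U ω, W ω))
      = ∑ a, ∑ b, (q b * negMulLog (p a) + p a * negMulLog (q b)) := by
        simp only [ent, hjoint, negMulLog_mul, ← Finset.sum_product']
        rfl
    _ = ent μ U + ent μ W := by
        simp only [Finset.sum_add_distrib, ← Finset.sum_mul, ← Finset.mul_sum, hq, one_mul, hp]
        rfl

/-- `H[U] + H[W] = H[U, W] ≤ H[U, V, W] = H[V, W]`, the last step because `U` is determined
by `(V, W)`. -/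
lemma ent_le_cent_of_indepFun_of_cent_eq_zero [IsProbabilityMeasure μ]
    [MeasurableSpace α] [MeasurableSingletonClass α]
    [MeasurableSpace γ] [MeasurableSingletonClass γ]
    {U : Ω → α} {V : Ω → β} {W : Ω → γ} (hU : Measurable U) (hW : Measurable W)
    (hUVW : ∀ c, MeasurableSet ((fun ω => (U ω, V ω, W ω)) ⁻¹' {c}))
    (hUW : ProbabilityTheory.IndepFun U W μ) (hdec : cent μ U (fun ω => (V ω, W ω)) = 0) :
    ent μ U ≤ cent μ V W := by
  have hadd := ent_pair_eq_add_of_indepFun hU hW hUW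
  have hproj := ent_comp_le (μ := μ) _ hUVW fun c => (c.1, c.2.2)
  unfold cent at hdec ⊢
  linarith

end Entropy

lemma indepFun_subtuple_of_notMem [∀ i, MeasurableSpace (𝒳 i)] {μ : Measure Ω}
    {X : ∀ i, Ω → 𝒳 i} (hX : ∀ i, Measurable (X i))
    (hindep : ProbabilityTheory.iIndepFun X μ)
    {i : Fin n} {A : Finset (Fin n)} (hA : i ∉ A) :
    ProbabilityTheory.IndepFun (X i) (subtuple X A) μ :=
  (hindep.indepFun_finset {i} A (Finset.disjoint_singleton_left.mpr hA) hX).comp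
    (φ := fun x : ∀ j : ({i} : Finset (Fin n)), 𝒳 j => x ⟨i, Finset.mem_singleton_self i⟩)
    (measurable_pi_apply _) measurable_id

theorem basic_converse_step_general
    [∀ i, Fintype (𝒳 i)]
    [∀ i, MeasurableSpace (𝒳 i)] [∀ i, DiscreteMeasurableSpace (𝒳 i)]
    [∀ J, Fintype (𝒴 J)]
    (μ : Measure Ω) [IsProbabilityMeasure μ]
    (X : ∀ i, Ω → 𝒳 i) (hXmeas : ∀ i, Measurable (X i))
    (hindep : ProbabilityTheory.iIndepFun X μ)
    (φ : ∀ J : Finset (Fin n), (∀ j : J, 𝒳 j.1) → 𝒴 J)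
    (i : Fin n) (A : Finset (Fin n)) (hA : i ∉ A)
    (hdec : cent μ (X i)
      (fun ω => (outputs φ X (fun J => J.Nonempty) ω, subtuple X A ω)) = 0) :
    ent μ (X i) ≤ cent μ (outputs φ X (fun J => J.Nonempty)) (subtuple X A) := by
  have hmessages : Measurable fun ω j => X j ω := measurable_pi_lambda _ hXmeas
  refine ent_le_cent_of_indepFun_of_cent_eq_zero (hXmeas i)
    (measurable_pi_lambda _ fun j => hXmeas j) (fun c => ?_)
    (indepFun_subtuple_of_notMem hXmeas hindep hA) hdec
  -- the whole triple is a function of the finitely valued message vector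
  exact hmessages (Set.toFinite ((fun x : ∀ j, 𝒳 j => (x i,
    (fun J : {J : Finset (Fin n) // J.Nonempty} => φ J.1 fun j => x j.1),
    fun j : A => x j.1)) ⁻¹' {c})).measurableSet

/-- **Basic converse step**: if `X_1, …, X_n` are mutually independent and
receiver `i` with side information `A_i ⊆ [n]∖{i}` can decode,
i.e. `H[X_i | Y_N, X_{A_i}] = 0`, then `H[X_i] ≤ H[Y_N | X_{A_i}]`. -/
theorem basic_converse_step
    [∀ i, Fintype (𝒳 i)] [∀ i, Nonempty (𝒳 i)]
    [∀ i, MeasurableSpace (𝒳 i)] [∀ i, DiscreteMeasurableSpace (𝒳 i)]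
    [∀ J, Fintype (𝒴 J)]
    (μ : Measure Ω) [IsProbabilityMeasure μ]
    (X : ∀ i, Ω → 𝒳 i) (hXmeas : ∀ i, Measurable (X i))
    (hindep : ProbabilityTheory.iIndepFun X μ)
    (φ : ∀ J : Finset (Fin n), (∀ j : J, 𝒳 j.1) → 𝒴 J)
    (i : Fin n) (A : Finset (Fin n)) (hA : i ∉ A)
    (hdec : cent μ (X i)
      (fun ω => (outputs φ X (fun J => J.Nonempty) ω, subtuple X A ω)) = 0) :
    ent μ (X i) ≤ cent μ (outputs φ X (fun J => J.Nonempty)) (subtuple X A) :=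
  basic_converse_step_general μ X hXmeas hindep φ i A hA hdec

end DistIndexCoding
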